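/- arXiv:2104.04610 — 3 statements merged into one kernel-verified Lean document; each statement's English description precedes it below -/
import Mathlib

section
/- Let X be a nonempty set and χ : X × X → ℝ a PSD kernel such that 0 ≤ χ(u,v) < 1 for all u, v ∈ X. Then the function (u, v) ↦ χ(u,v)/(1 − χ(u,v)) is a PSD kernel on X. -/
open scoped BigOperators

/-- A positive semi-definite (PSD) kernel on `X`: symmetric and with nonnegative
Gram quadratic forms. -/
def IsPSDKernel {X : Type*} (K : X → X → ℝ) : Prop :=
  (∀ u v, K u v = K v u) ∧
  ∀ (N : ℕ) (x : Fin N → X) (c : Fin N → ℝ),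
    0 ≤ ∑ i, ∑ j, c i * c j * K (x i) (x j)

/-- The entrywise powers of a PSD kernel have nonnegative quadratic forms. -/
lemma psd_pow_quadform {X : Type*} (χ : X → X → ℝ) (hχ : IsPSDKernel χ)
    (N : ℕ) (x : Fin N → X) :
    ∀ (n : ℕ) (c : Fin N → ℝ),
      0 ≤ ∑ i, ∑ j, c i * c j * (χ (x i) (x j)) ^ (n + 1) := by
  have hMsd : (Matrix.of fun i j => χ (x i) (x j) : Matrix (Fin N) (Fin N) ℝ).PosSemidef := by
    refine Matrix.posSemidef_iff_dotProduct_mulVec.mpr ⟨?_, ?_⟩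
    · ext i j
      simp [Matrix.conjTranspose_apply, hχ.1 (x i) (x j)]
    · intro c
      have h := hχ.2 N x c
      simp only [star_trivial, dotProduct, Matrix.mulVec, dotProduct,
        Matrix.of_apply, Finset.mul_sum]
      refine h.trans_eq (Finset.sum_congr rfl fun i _ => ?_)
      exact Finset.sum_congr rfl fun j _ => by ring
  open scoped MatrixOrder in
  obtain ⟨B, hB⟩ := CStarAlgebra.nonneg_iff_eq_star_mul_self.mp hMsd.nonneg
  rw [Matrix.star_eq_conjTranspose] at hB
  have hentry : ∀ i j, χ (x i) (x j) = ∑ k, B k i * B k j := by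
    intro i j
    have h : (Matrix.of fun i j => χ (x i) (x j) : Matrix (Fin N) (Fin N) ℝ) i j
        = (B.conjTranspose * B) i j := by rw [← hB]
    simpa [Matrix.mul_apply, Matrix.conjTranspose_apply] using h
  intro n
  induction n with
  | zero =>
    intro c
    simpa [pow_one] using hχ.2 N x c
  | succ n ih =>
    intro c
    have h1 : ∀ i j : Fin N, c i * c j * (χ (x i) (x j)) ^ (n + 2)
        = ∑ k, (c i * B k i) * (c j * B k j) * (χ (x i) (x j)) ^ (n + 1) := by
      intro i j
      calc c i * c j * (χ (x i) (x j)) ^ (n + 2)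
          = (∑ k, B k i * B k j) * (c i * c j * (χ (x i) (x j)) ^ (n + 1)) := by
            rw [← hentry i j]; ring
        _ = ∑ k, (c i * B k i) * (c j * B k j) * (χ (x i) (x j)) ^ (n + 1) := by
            rw [Finset.sum_mul]
            exact Finset.sum_congr rfl fun k _ => by ring
    have key : ∑ i, ∑ j, c i * c j * (χ (x i) (x j)) ^ (n + 2)
        = ∑ k, ∑ i, ∑ j, (c i * B k i) * (c j * B k j) * (χ (x i) (x j)) ^ (n + 1) :=
      calc ∑ i, ∑ j, c i * c j * (χ (x i) (x j)) ^ (n + 2)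
          = ∑ i, ∑ j, ∑ k, (c i * B k i) * (c j * B k j) * (χ (x i) (x j)) ^ (n + 1) :=
            Finset.sum_congr rfl fun i _ => Finset.sum_congr rfl fun j _ => h1 i j
        _ = ∑ i, ∑ k, ∑ j, (c i * B k i) * (c j * B k j) * (χ (x i) (x j)) ^ (n + 1) :=
            Finset.sum_congr rfl fun i _ => Finset.sum_comm
        _ = ∑ k, ∑ i, ∑ j, (c i * B k i) * (c j * B k j) * (χ (x i) (x j)) ^ (n + 1) :=
            Finset.sum_comm
    rw [key]
    exact Finset.sum_nonneg fun k _ => ih (fun i => c i * B k i)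

/-- If `χ` is a PSD kernel with `0 ≤ χ(u,v) < 1` everywhere, then
`χ/(1−χ)` is a PSD kernel. -/
theorem psd_div_one_sub {X : Type*} [Nonempty X] (χ : X → X → ℝ)
    (hχ : IsPSDKernel χ) (hb : ∀ u v, 0 ≤ χ u v ∧ χ u v < 1) :
    IsPSDKernel (fun u v => χ u v / (1 - χ u v)) := by
  constructor
  · intro u v
    simp [hχ.1 u v]
  · intro N x c
    -- χ/(1-χ) = ∑' n, χ^(n+1)
    have hgeom : ∀ u v, χ u v / (1 - χ u v) = ∑' n : ℕ, (χ u v) ^ (n + 1) := by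
      intro u v
      obtain ⟨h0, h1⟩ := hb u v
      have hsum : ∑' n : ℕ, (χ u v) ^ n = (1 - χ u v)⁻¹ :=
        tsum_geometric_of_lt_one h0 h1
      have : ∑' n : ℕ, (χ u v) ^ (n + 1) = χ u v * ∑' n : ℕ, (χ u v) ^ n := by
        rw [← tsum_mul_left]
        exact tsum_congr fun n => by ring
      rw [this, hsum, div_eq_mul_inv]
    have hsummable : ∀ u v, Summable fun n : ℕ => (χ u v) ^ (n + 1) := by
      intro u v
      obtain ⟨h0, h1⟩ := hb u v
      exact Summable.congr (Summable.mul_left (χ u v)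
        (summable_geometric_of_lt_one h0 h1)) (fun n => by ring)
    have hsummable' : ∀ (i j : Fin N),
        Summable fun n : ℕ => c i * c j * (χ (x i) (x j)) ^ (n + 1) :=
      fun i j => Summable.mul_left _ (hsummable (x i) (x j))
    have hswap : ∑ i, ∑ j, c i * c j * (χ (x i) (x j) / (1 - χ (x i) (x j)))
        = ∑' n : ℕ, ∑ i, ∑ j, c i * c j * (χ (x i) (x j)) ^ (n + 1) := by
      rw [Summable.tsum_finsetSum (fun i _ => summable_sum fun j _ => hsummable' i j)]
      apply Finset.sum_congr rfl
      intro i _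
      rw [Summable.tsum_finsetSum (fun j _ => hsummable' i j)]
      apply Finset.sum_congr rfl
      intro j _
      rw [hgeom (x i) (x j), ← tsum_mul_left]
    rw [show (∑ i, ∑ j, c i * c j * (fun u v => χ u v / (1 - χ u v)) (x i) (x j))
        = ∑ i, ∑ j, c i * c j * (χ (x i) (x j) / (1 - χ (x i) (x j))) from rfl, hswap]
    exact tsum_nonneg fun n => psd_pow_quadform χ hχ N x n c
end

section
/- For every positive integer d, the function k(u, v) = ((1/2)·exp(−‖u − v‖₂²)) / (1 − (1/2)·exp(−‖u − v‖₂²)) is a PSD kernel on ℝ^d. -/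
open scoped BigOperators

open Finset in
lemma quad_inner_pow {d m N : ℕ} (x : Fin N → EuclideanSpace ℝ (Fin d)) (c : Fin N → ℝ) :
    0 ≤ ∑ i, ∑ j, c i * c j * (inner ℝ (x i) (x j) : ℝ) ^ m := by
  have hin : ∀ i j, (inner ℝ (x i) (x j) : ℝ) ^ m
      = ∑ p : Fin m → Fin d, ∏ t, x i (p t) * x j (p t) := by
    intro i j
    rw [PiLp.inner_apply]
    simp only [Real.inner_apply, conj_trivial]
    exact Fintype.sum_pow _ m
  calc (0:ℝ) ≤ ∑ p : Fin m → Fin d, (∑ i, c i * ∏ t, x i (p t)) ^ 2 := by positivity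
    _ = ∑ i, ∑ j, c i * c j * (inner ℝ (x i) (x j) : ℝ) ^ m := by
        simp only [hin, Finset.mul_sum, Finset.sum_mul, sq]
        rw [Finset.sum_comm]
        refine Finset.sum_congr rfl fun i _ => ?_
        rw [Finset.sum_comm]
        refine Finset.sum_congr rfl fun j _ => Finset.sum_congr rfl fun p _ => ?_
        rw [Finset.prod_mul_distrib]
        ring

lemma quad_exp_inner {d N : ℕ} (t : ℝ) (ht : 0 ≤ t)
    (x : Fin N → EuclideanSpace ℝ (Fin d)) (c : Fin N → ℝ) :
    0 ≤ ∑ i, ∑ j, c i * c j * Real.exp (t * (inner ℝ (x i) (x j) : ℝ)) := by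
  have hexp : ∀ i j, c i * c j * Real.exp (t * (inner ℝ (x i) (x j) : ℝ))
      = ∑' m : ℕ, c i * c j * (t ^ m / (m.factorial : ℝ)) * (inner ℝ (x i) (x j) : ℝ) ^ m := by
    intro i j
    rw [Real.exp_eq_exp_ℝ, NormedSpace.exp_eq_tsum_div, ← tsum_mul_left]
    congr 1; ext m; rw [mul_pow]; ring
  have hs : ∀ i j : Fin N, Summable (fun m : ℕ =>
      c i * c j * (t ^ m / (m.factorial : ℝ)) * (inner ℝ (x i) (x j) : ℝ) ^ m) := by
    intro i j
    have := Real.summable_pow_div_factorial (t * (inner ℝ (x i) (x j) : ℝ))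
    have := this.mul_left (c i * c j)
    refine this.congr fun m => ?_
    rw [mul_pow]; ring
  calc (0:ℝ) ≤ ∑' m : ℕ, ∑ i, ∑ j,
        c i * c j * (t ^ m / (m.factorial : ℝ)) * (inner ℝ (x i) (x j) : ℝ) ^ m := by
        refine tsum_nonneg fun m => ?_
        have h := quad_inner_pow (m := m) x (fun i => c i * Real.sqrt (t ^ m / (m.factorial : ℝ)))
        refine h.trans_eq ?_
        refine Finset.sum_congr rfl fun i _ => Finset.sum_congr rfl fun j _ => ?_
        have hss : Real.sqrt (t ^ m / (m.factorial : ℝ)) * Real.sqrt (t ^ m / (m.factorial : ℝ))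
            = t ^ m / (m.factorial : ℝ) := Real.mul_self_sqrt (by positivity)
        linear_combination (c i * c j * (inner ℝ (x i) (x j) : ℝ) ^ m) * hss
    _ = ∑ i, ∑ j, c i * c j * Real.exp (t * (inner ℝ (x i) (x j) : ℝ)) := by
        rw [Summable.tsum_finsetSum (fun i _ => summable_sum fun j _ => hs i j)]
        refine Finset.sum_congr rfl fun i _ => ?_
        rw [Summable.tsum_finsetSum (fun j _ => hs i j)]
        exact Finset.sum_congr rfl fun j _ => (hexp i j).symm

lemma quad_gaussian {d N : ℕ} (t : ℝ) (ht : 0 ≤ t)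
    (x : Fin N → EuclideanSpace ℝ (Fin d)) (c : Fin N → ℝ) :
    0 ≤ ∑ i, ∑ j, c i * c j * Real.exp (-(t * ‖x i - x j‖ ^ 2)) := by
  have h := quad_exp_inner (2 * t) (by linarith) x
      (fun i => c i * Real.exp (-(t * ‖x i‖ ^ 2)))
  refine h.trans_eq (Finset.sum_congr rfl fun i _ => Finset.sum_congr rfl fun j _ => ?_)
  have hn : ‖x i - x j‖ ^ 2 = ‖x i‖ ^ 2 - 2 * (inner ℝ (x i) (x j) : ℝ) + ‖x j‖ ^ 2 :=
    norm_sub_sq_real _ _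
  have key : Real.exp (-(t * ‖x i‖ ^ 2)) * Real.exp (-(t * ‖x j‖ ^ 2))
      * Real.exp (2 * t * (inner ℝ (x i) (x j) : ℝ)) = Real.exp (-(t * ‖x i - x j‖ ^ 2)) := by
    rw [← Real.exp_add, ← Real.exp_add, hn]; ring_nf
  rw [← key]; ring


/-- The kernel
`k(u,v) = ((1/2)·exp(−‖u−v‖²)) / (1 − (1/2)·exp(−‖u−v‖²))` is PSD on `ℝ^d`. -/
theorem kernel_k_isPSD (d : ℕ) (hd : 0 < d) :
    IsPSDKernel (fun u v : EuclideanSpace ℝ (Fin d) =>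
      ((1 / 2) * Real.exp (-‖u - v‖ ^ 2)) /
        (1 - (1 / 2) * Real.exp (-‖u - v‖ ^ 2))) := by
  constructor
  · intro u v
    dsimp only
    rw [norm_sub_rev]
  · intro N x c
    dsimp only
    have hg0 : ∀ i j : Fin N, 0 ≤ (1/2 : ℝ) * Real.exp (-‖x i - x j‖ ^ 2) :=
      fun i j => by positivity
    have hg1 : ∀ i j : Fin N, (1/2 : ℝ) * Real.exp (-‖x i - x j‖ ^ 2) < 1 := by
      intro i j
      have h1 : Real.exp (-‖x i - x j‖ ^ 2) ≤ 1 := by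
        rw [Real.exp_le_one_iff]
        have : (0:ℝ) ≤ ‖x i - x j‖ ^ 2 := by positivity
        linarith
      linarith
    have hsum : ∀ i j : Fin N, Summable (fun n : ℕ =>
        c i * c j * ((1/2 : ℝ) * Real.exp (-‖x i - x j‖ ^ 2)) ^ (n+1)) := by
      intro i j
      have h := summable_geometric_of_lt_one (hg0 i j) (hg1 i j)
      refine (h.mul_left (c i * c j * ((1/2 : ℝ) * Real.exp (-‖x i - x j‖ ^ 2)))).congr
        fun n => ?_
      rw [pow_succ']; ring
    have hquad : ∀ n : ℕ, 0 ≤ ∑ i, ∑ j,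
        c i * c j * ((1/2 : ℝ) * Real.exp (-‖x i - x j‖ ^ 2)) ^ (n+1) := by
      intro n
      have h := quad_gaussian ((n:ℝ)+1) (by positivity) x
        (fun i => c i * Real.sqrt ((1/2 : ℝ)^(n+1)))
      have hss : Real.sqrt ((1/2:ℝ)^(n+1)) * Real.sqrt ((1/2:ℝ)^(n+1)) = (1/2:ℝ)^(n+1) :=
        Real.mul_self_sqrt (by positivity)
      refine h.trans_eq (Finset.sum_congr rfl fun i _ => Finset.sum_congr rfl fun j _ => ?_)
      have he : ((1/2:ℝ) * Real.exp (-‖x i - x j‖ ^ 2)) ^ (n+1)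
          = (1/2:ℝ)^(n+1) * Real.exp (-(((n:ℝ)+1) * ‖x i - x j‖ ^ 2)) := by
        rw [mul_pow, ← Real.exp_nat_mul]
        congr 2
        push_cast
        ring
      rw [he]
      linear_combination (c i * c j * Real.exp (-(((n:ℝ)+1) * ‖x i - x j‖ ^ 2))) * hss
    calc (0:ℝ) ≤ ∑' n : ℕ, ∑ i, ∑ j,
          c i * c j * ((1/2 : ℝ) * Real.exp (-‖x i - x j‖ ^ 2)) ^ (n+1) :=
        tsum_nonneg hquad
      _ = ∑ i, ∑ j, c i * c j * (((1/2 : ℝ) * Real.exp (-‖x i - x j‖ ^ 2)) /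
          (1 - (1/2 : ℝ) * Real.exp (-‖x i - x j‖ ^ 2))) := by
        rw [Summable.tsum_finsetSum (fun i _ => summable_sum fun j _ => hsum i j)]
        refine Finset.sum_congr rfl fun i _ => ?_
        rw [Summable.tsum_finsetSum (fun j _ => hsum i j)]
        refine Finset.sum_congr rfl fun j _ => ?_
        set g : ℝ := (1/2 : ℝ) * Real.exp (-‖x i - x j‖ ^ 2) with hgdef
        have : ∑' n : ℕ, c i * c j * g ^ (n+1) = c i * c j * (g * (1-g)⁻¹) := by
          rw [tsum_mul_left]
          congr 1
          rw [← tsum_geometric_of_lt_one (hg0 i j) (hg1 i j), ← tsum_mul_left]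
          exact tsum_congr fun n => by rw [← hgdef]; exact pow_succ' _ _
        rw [this, div_eq_mul_inv]
end

section
/- Fix positive integers n and m. For an alignment path π ∈ 𝒜_{n,m} of length L and a vector v ∈ (ℕ_{≥1})^L of positive integers, let π_v denote the finite sequence of index pairs obtained from π by repeating its j-th pair v_j consecutive times, for j = 1, …, L. For a ∈ (ℕ_{≥1})^n and b ∈ (ℕ_{≥1})^m with a_1 + ⋯ + a_n = b_1 + ⋯ + b_m = p, let ε_a ⊗ ε_b denote the length-p sequence of index pairs whose sequence of first coordinates is (1 repeated a_1 times, 2 repeated a_2 times, …, n repeated a_n times) and whose sequence of second coordinates is (1 repeated b_1 times, …, m repeated b_m times). Then the map (π, v) ↦ π_v is a bijection from the set {(π, v) : π ∈ 𝒜_{n,m}, v ∈ (ℕ_{≥1})^{|π|}} onto the set of all sequences of the form ε_a ⊗ ε_b with a ∈ (ℕ_{≥1})^n, b ∈ (ℕ_{≥1})^m and a_1 + ⋯ + a_n = b_1 + ⋯ + b_m; in particular, for every such pair (a, b) there exists a unique pair (π, v) with π_v = ε_a ⊗ ε_b. -/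
open scoped BigOperators

/-- One admissible move of an alignment path: advance the second index, the first
index, or both, by one. -/
def AlignStep {n m : ℕ} (p q : Fin n × Fin m) : Prop :=
  ((q.1 : ℕ) = (p.1 : ℕ) ∧ (q.2 : ℕ) = (p.2 : ℕ) + 1) ∨
  ((q.1 : ℕ) = (p.1 : ℕ) + 1 ∧ (q.2 : ℕ) = (p.2 : ℕ)) ∨
  ((q.1 : ℕ) = (p.1 : ℕ) + 1 ∧ (q.2 : ℕ) = (p.2 : ℕ) + 1)

/-- An alignment path in `𝒜_{n+1,m+1}` (indices written 0-based): a nonempty list of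
index pairs starting at `(0,0)`, ending at `(n,m)`, with admissible steps. -/
def IsAlignmentPath (n m : ℕ) (π : List (Fin (n + 1) × Fin (m + 1))) : Prop :=
  π ≠ [] ∧ π.head? = some (0, 0) ∧ π.getLast? = some (Fin.last n, Fin.last m) ∧
  π.Chain' AlignStep

/-- The set `𝒜_{n+1,m+1}` of alignment paths, as a subtype. -/
def AlignmentPath (n m : ℕ) := {π : List (Fin (n + 1) × Fin (m + 1)) // IsAlignmentPath n m π}

/-- `π_v`: the list obtained from `π` by repeating its `j`-th entry `v j` consecutive
times. -/
def expandPath {α : Type*} (π : List α) (v : Fin π.length → ℕ+) : List α :=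
  ((List.finRange π.length).map (fun j => List.replicate (v j : ℕ) (π.get j))).flatten

/-- `ε_a`: the list `(0 repeated a₀ times, 1 repeated a₁ times, …)`. -/
def epsSeq {n : ℕ} (a : Fin n → ℕ+) : List (Fin n) :=
  ((List.finRange n).map (fun i => List.replicate (a i : ℕ) i)).flatten

/-- `ε_a ⊗ ε_b`: the sequence of index pairs with first coordinates `ε_a` and second
coordinates `ε_b`. -/
def tensorSeq {n m : ℕ} (a : Fin n → ℕ+) (b : Fin m → ℕ+) : List (Fin n × Fin m) :=
  (epsSeq a).zip (epsSeq b)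

section aux
variable {α : Type*}

lemma expandPath_nil (v : Fin ([] : List α).length → ℕ+) : expandPath ([] : List α) v = [] := by
  simp [expandPath]

lemma expandPath_cons (x : α) (l : List α) (v : Fin (x :: l).length → ℕ+) :
    expandPath (x :: l) v = List.replicate (v ⟨0, Nat.succ_pos _⟩ : ℕ) x ++ expandPath l (fun j => v j.succ) := by
  simp [expandPath, List.finRange_succ, List.map_map, Function.comp_def]

lemma pnat_succ (k : ℕ+) : ∃ j : ℕ, (k : ℕ) = j + 1 := ⟨(k : ℕ) - 1, (Nat.succ_pred_eq_of_pos k.pos).symm⟩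

lemma expandPath_ne_nil {l : List α} (h : l ≠ []) (v : Fin l.length → ℕ+) :
    expandPath l v ≠ [] := by
  cases l with
  | nil => exact absurd rfl h
  | cons x t =>
    obtain ⟨j, hj⟩ := pnat_succ (v ⟨0, Nat.succ_pos _⟩)
    simp [expandPath_cons, hj]

lemma expandPath_head? {l : List α} (h : l ≠ []) (v : Fin l.length → ℕ+) :
    (expandPath l v).head? = l.head? := by
  cases l with
  | nil => exact absurd rfl h
  | cons x t =>
    obtain ⟨j, hj⟩ := pnat_succ (v ⟨0, Nat.succ_pos _⟩)
    rw [expandPath_cons, hj, List.replicate_succ]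
    simp

lemma expandPath_getLast? (l : List α) (v : Fin l.length → ℕ+) :
    (expandPath l v).getLast? = l.getLast? := by
  induction l with
  | nil => simp [expandPath_nil]
  | cons x t ih =>
    rw [expandPath_cons]
    rcases eq_or_ne t [] with rfl | ht
    · obtain ⟨j, hj⟩ := pnat_succ (v ⟨0, Nat.succ_pos _⟩)
      rw [hj, List.replicate_succ']
      simp [expandPath_nil, List.getLast?_concat]
    · rw [List.getLast?_append_of_ne_nil _ (expandPath_ne_nil ht _), ih]
      obtain ⟨y, t', rfl⟩ := List.exists_cons_of_ne_nil ht
      simp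

lemma expandPath_chain' {R S : α → α → Prop} (hrefl : ∀ a, S a a)
    (himp : ∀ a b, R a b → S a b) {l : List α} (h : l.Chain' R) (v : Fin l.length → ℕ+) :
    (expandPath l v).Chain' S := by
  induction l with
  | nil => simp [expandPath_nil, List.Chain']
  | cons x t ih =>
    rw [expandPath_cons]
    replace h := List.isChain_cons.1 h
    refine List.isChain_append.2 ⟨List.isChain_replicate_of_rel _ (hrefl x), ih h.2 _, ?_⟩
    intro a ha b hb
    have hax : a = x := by
      have := List.mem_of_mem_getLast? ha
      exact (List.eq_of_mem_replicate this)
    subst hax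
    rcases eq_or_ne t [] with rfl | ht
    · simp [expandPath_nil] at hb
    · rw [expandPath_head? ht] at hb
      exact himp _ _ (h.1 b hb)

end aux

section aux2
variable {α : Type*}

lemma replicate_append_cancel {x : α} : ∀ (k k' : ℕ) (e e' : List α),
    (∀ y ∈ e.head?, y ≠ x) → (∀ y ∈ e'.head?, y ≠ x) →
    List.replicate k x ++ e = List.replicate k' x ++ e' → k = k' ∧ e = e' := by
  intro k
  induction k with
  | zero =>
    intro k' e e' he he' h
    cases k' with
    | zero => simpa using h
    | succ j =>
      rw [List.replicate_succ] at h
      simp only [List.replicate_zero, List.nil_append, List.cons_append] at h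
      rw [h] at he
      exact ((he x (by simp)) rfl).elim
  | succ k ih =>
    intro k' e e' he he' h
    cases k' with
    | zero =>
      rw [List.replicate_succ] at h
      simp only [List.replicate_zero, List.nil_append, List.cons_append] at h
      rw [← h] at he'
      exact ((he' x (by simp)) rfl).elim
    | succ j =>
      rw [List.replicate_succ, List.replicate_succ] at h
      simp only [List.cons_append, List.cons.injEq] at h
      obtain ⟨h1, h2⟩ := ih j e e' he he' h.2
      exact ⟨by omega, h2⟩

lemma expand_head_ne {x : α} {t : List α} (h : (x :: t).Chain' Ne) (w : Fin t.length → ℕ+) :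
    ∀ y ∈ (expandPath t w).head?, y ≠ x := by
  intro y hy
  rcases eq_or_ne t [] with rfl | ht
  · simp [expandPath_nil] at hy
  · rw [expandPath_head? ht] at hy
    exact ((List.isChain_cons.1 h).1 y hy).symm

lemma expand_inj_path : ∀ (π : List α), π.Chain' Ne → ∀ (π' : List α), π'.Chain' Ne →
    ∀ (v : Fin π.length → ℕ+) (v' : Fin π'.length → ℕ+),
    expandPath π v = expandPath π' v' → π = π' := by
  intro π
  induction π with
  | nil =>
    intro _ π' _ v v' h
    cases π' with
    | nil => rfl
    | cons y t' =>
      rw [expandPath_nil] at h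
      exact absurd h.symm (expandPath_ne_nil (by simp) v')
  | cons x t ih =>
    intro hc π' hc' v v' h
    cases π' with
    | nil =>
      rw [expandPath_nil] at h
      exact absurd h (expandPath_ne_nil (by simp) v)
    | cons y t' =>
      have hxy : x = y := by
        have h1 := congrArg List.head? h
        rw [expandPath_head? (by simp), expandPath_head? (by simp)] at h1
        simpa using h1
      subst hxy
      rw [expandPath_cons, expandPath_cons] at h
      obtain ⟨hk, he⟩ :=
        replicate_append_cancel _ _ _ _ (expand_head_ne hc _) (expand_head_ne hc' _) h
      rw [ih (List.isChain_cons.1 hc).2 t' (List.isChain_cons.1 hc').2 _ _ he]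

lemma expand_inj_v : ∀ (π : List α), π.Chain' Ne →
    ∀ (v v' : Fin π.length → ℕ+), expandPath π v = expandPath π v' → v = v' := by
  intro π
  induction π with
  | nil =>
    intro _ v v' _
    funext j
    exact absurd j.isLt (by simp)
  | cons x t ih =>
    intro hc v v' h
    rw [expandPath_cons, expandPath_cons] at h
    obtain ⟨hk, he⟩ :=
      replicate_append_cancel _ _ _ _ (expand_head_ne hc _) (expand_head_ne hc _) h
    have h2 := ih (List.isChain_cons.1 hc).2 _ _ he
    funext j
    rcases j with ⟨jv, hj⟩
    cases jv with
    | zero => exact PNat.coe_injective hk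
    | succ i => exact congrFun h2 ⟨i, Nat.lt_of_succ_lt_succ hj⟩

lemma expand_decode {R : α → α → Prop} :
    ∀ l : List α, l ≠ [] → l.Chain' R →
      ∃ (π : List α) (v : Fin π.length → ℕ+),
        expandPath π v = l ∧ π ≠ [] ∧ π.head? = l.head? ∧ π.getLast? = l.getLast? ∧
        π.Chain' (fun p q => R p q ∧ p ≠ q) := by
  intro l
  induction l with
  | nil => intro h; exact absurd rfl h
  | cons x t ih =>
    intro _ hc
    cases t with
    | nil =>
      refine ⟨[x], fun _ => 1, ?_, by simp, rfl, rfl, List.isChain_singleton x⟩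
      rw [expandPath_cons]
      simp [expandPath_nil]
    | cons y t' =>
      obtain ⟨π, v, hexp, hne, hh, hl, hch⟩ := ih (by simp) (List.isChain_cons_cons.1 hc).2
      obtain ⟨z, π', rfl⟩ := List.exists_cons_of_ne_nil hne
      have hz : z = y := by simpa using hh
      subst hz
      by_cases hxy : x = z
      · subst hxy
        refine ⟨x :: π', fun j => if (j : ℕ) = 0 then v j + 1 else v j, ?_, by simp, rfl, ?_, hch⟩
        · rw [expandPath_cons]
          have h1 : (fun j : Fin π'.length =>
              if ((j.succ : Fin (x :: π').length) : ℕ) = 0 then v j.succ + 1 else v j.succ) =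
              fun j => v j.succ := by
            funext j
            rw [if_neg (by simp [Fin.val_succ])]
          have h0 : ((v ⟨0, Nat.succ_pos _⟩ + 1 : ℕ+) : ℕ) = (v ⟨0, Nat.succ_pos _⟩ : ℕ) + 1 := by
            push_cast; ring
          rw [h1, if_pos rfl, h0, List.replicate_succ, List.cons_append,
            ← expandPath_cons x π' v, hexp]
        · rw [List.getLast?_cons_cons]
          exact hl
      · refine ⟨x :: z :: π',
          fun j => if h0 : (j : ℕ) = 0 then 1 else
            v ⟨(j : ℕ) - 1, by have := j.isLt; simp only [List.length_cons] at *; omega⟩,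
          ?_, by simp, rfl, ?_, ?_⟩
        · rw [expandPath_cons]
          have h1 : (fun j : Fin (z :: π').length =>
              if h0 : ((j.succ : Fin (x :: z :: π').length) : ℕ) = 0 then (1 : ℕ+) else
                v ⟨((j.succ : Fin (x :: z :: π').length) : ℕ) - 1, by
                  have := (j.succ : Fin (x :: z :: π').length).isLt
                  simp only [List.length_cons] at *; omega⟩) = v := by
            funext j
            rw [dif_neg (by simp [Fin.val_succ])]
            exact congrArg v (Fin.ext (by simp [Fin.val_succ]))
          rw [h1, dif_pos rfl, hexp]
          simp
        · rw [List.getLast?_cons_cons]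
          exact hl
        · exact List.isChain_cons_cons.2 ⟨⟨(List.isChain_cons_cons.1 hc).1, hxy⟩, hch⟩

end aux2

def StepOne {N : ℕ} (i j : Fin N) : Prop := (j : ℕ) = (i : ℕ) ∨ (j : ℕ) = (i : ℕ) + 1

section fin
variable {n : ℕ}

lemma epsSeq_eq_expand (a : Fin (n + 1) → ℕ+) :
    epsSeq a =
      expandPath (List.finRange (n + 1)) (fun j => a ((List.finRange (n + 1)).get j)) := by
  unfold epsSeq expandPath
  conv_lhs => rw [← List.map_get_finRange (List.finRange (n + 1))]
  rw [List.map_map]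
  rfl

lemma finRange_ne_nil : (List.finRange (n + 1)) ≠ [] := by
  rw [List.finRange_succ]; simp

lemma finRange_head? : (List.finRange (n + 1)).head? = some 0 := by
  rw [List.finRange_succ]; rfl

lemma finRange_getLast? : (List.finRange (n + 1)).getLast? = some (Fin.last n) := by
  rw [List.getLast?_eq_getElem?, List.getElem?_eq_getElem (by simp)]
  simp [Fin.last, Fin.ext_iff]

lemma finRange_chain' :
    (List.finRange (n + 1)).Chain' (fun i j : Fin (n + 1) => (j : ℕ) = (i : ℕ) + 1) := by
  unfold List.Chain'
  rw [List.isChain_iff_getElem]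
  intro i h
  simp

lemma eq_finRange (σ : List (Fin (n + 1))) (hne : σ ≠ []) (hh : σ.head? = some 0)
    (hl : σ.getLast? = some (Fin.last n))
    (hc : σ.Chain' (fun i j : Fin (n + 1) => (j : ℕ) = (i : ℕ) + 1)) :
    σ = List.finRange (n + 1) := by
  have hget : ∀ i (h : i < σ.length), (σ.get ⟨i, h⟩).val = i := by
    intro i
    induction i with
    | zero =>
      intro h
      obtain ⟨x, t, rfl⟩ := List.exists_cons_of_ne_nil hne
      have hx : x = 0 := by simpa using hh
      simp [hx]
    | succ i ih =>
      intro h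
      have h1 : i + 1 < σ.length := by omega
      have h2 := List.isChain_iff_getElem.1 hc i h1
      show (σ[i+1]).val = i + 1
      have h3 := ih (by omega)
      simp only [List.get_eq_getElem] at h3
      rw [h2, h3]
  have hlast : σ.getLast hne = Fin.last n := by
    rw [List.getLast?_eq_getLast hne] at hl
    exact Option.some_injective _ hl
  have hpos : 0 < σ.length := List.length_pos_iff.2 hne
  have hlen : σ.length = n + 1 := by
    have h3 : (σ.getLast hne).val = σ.length - 1 := by
      rw [List.getLast_eq_getElem]
      have := hget (σ.length - 1) (by omega)
      simpa using this
    rw [hlast] at h3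
    simp only [Fin.val_last] at h3
    omega
  refine List.ext_get (by simp [hlen]) ?_
  intro i h1 h2
  rw [List.get_finRange]
  exact Fin.ext (by simpa using hget i h1)

lemma epsSeq_ne_nil (a : Fin (n + 1) → ℕ+) : epsSeq a ≠ [] := by
  rw [epsSeq_eq_expand]
  exact expandPath_ne_nil finRange_ne_nil _

lemma epsSeq_head? (a : Fin (n + 1) → ℕ+) : (epsSeq a).head? = some 0 := by
  rw [epsSeq_eq_expand, expandPath_head? finRange_ne_nil, finRange_head?]

lemma epsSeq_getLast? (a : Fin (n + 1) → ℕ+) : (epsSeq a).getLast? = some (Fin.last n) := by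
  rw [epsSeq_eq_expand, expandPath_getLast?, finRange_getLast?]

lemma epsSeq_chain' (a : Fin (n + 1) → ℕ+) : (epsSeq a).Chain' StepOne := by
  rw [epsSeq_eq_expand]
  exact expandPath_chain' (S := StepOne) (fun i => Or.inl rfl) (fun i j h => Or.inr h) finRange_chain' _

lemma length_epsSeq (a : Fin (n + 1) → ℕ+) : (epsSeq a).length = ∑ i, (a i : ℕ) := by
  simp [epsSeq, Function.comp_def, Fin.sum_univ_def]

lemma eps_decode (l : List (Fin (n + 1))) (hne : l ≠ []) (hh : l.head? = some 0)
    (hl : l.getLast? = some (Fin.last n)) (hc : l.Chain' StepOne) :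
    ∃ a : Fin (n + 1) → ℕ+, l = epsSeq a := by
  obtain ⟨π, v, hexp, hpne, hph, hpl, hpc⟩ := expand_decode l hne hc
  have hc' : π.Chain' (fun i j : Fin (n + 1) => (j : ℕ) = (i : ℕ) + 1) := by
    refine hpc.imp ?_
    rintro p q ⟨hs | hs, hne2⟩
    · exact absurd (Fin.ext hs).symm hne2
    · exact hs
  have hfr : π = List.finRange (n + 1) := eq_finRange π hpne (hph.trans hh) (hpl.trans hl) hc'
  subst hfr
  refine ⟨fun i => v ⟨(i : ℕ), by have := i.isLt; simp; omega⟩, ?_⟩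
  rw [epsSeq_eq_expand, ← hexp]
  exact (congrArg (expandPath _) (funext fun j => congrArg v (Fin.ext (by simp)))).symm

end fin

def WeakStep {N M : ℕ} (p q : Fin N × Fin M) : Prop := StepOne p.1 q.1 ∧ StepOne p.2 q.2

lemma alignStep_iff {n m : ℕ} (p q : Fin (n + 1) × Fin (m + 1)) :
    AlignStep p q ↔ WeakStep p q ∧ p ≠ q := by
  simp only [AlignStep, WeakStep, StepOne, ne_eq, Prod.ext_iff, Fin.ext_iff, not_and]
  omega

lemma weakStep_refl {N M : ℕ} (p : Fin N × Fin M) : WeakStep p p := ⟨Or.inl rfl, Or.inl rfl⟩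

section zips
variable {α : Type*} {β : Type*}

lemma zip_head? {l1 : List α} {l2 : List β} {x : α} {y : β}
    (g1 : l1.head? = some x) (g2 : l2.head? = some y) : (l1.zip l2).head? = some (x, y) := by
  cases l1 with
  | nil => simp at g1
  | cons a t1 =>
    cases l2 with
    | nil => simp at g2
    | cons b t2 =>
      simp_all

lemma zip_getLast? {l1 : List α} {l2 : List β} (h : l1.length = l2.length)
    (h1 : l1 ≠ []) {x : α} {y : β}
    (g1 : l1.getLast? = some x) (g2 : l2.getLast? = some y) :
    (l1.zip l2).getLast? = some (x, y) := by
  have hpos : 0 < l1.length := List.length_pos_iff.2 h1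
  have hlen : (l1.zip l2).length = l1.length := by simp [h]
  rw [List.getLast?_eq_getElem?] at g1 g2 ⊢
  rw [List.getElem?_eq_getElem (by omega)] at g1
  rw [← h] at g2
  rw [List.getElem?_eq_getElem (by omega)] at g2
  rw [hlen, List.getElem?_eq_getElem (by omega), List.getElem_zip]
  rw [Option.some_inj] at g1 g2 ⊢
  rw [Prod.ext_iff]
  exact ⟨g1, g2⟩

lemma zip_chain' {R : α → α → Prop} {S : β → β → Prop} {l1 : List α} {l2 : List β}
    (h : l1.length = l2.length) (c1 : l1.Chain' R) (c2 : l2.Chain' S) :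
    (l1.zip l2).Chain' (fun p q => R p.1 q.1 ∧ S p.2 q.2) := by
  have hlen : (l1.zip l2).length = l1.length := by simp [h]
  unfold List.Chain' at c1 c2 ⊢
  rw [List.isChain_iff_getElem] at c1 c2 ⊢
  intro i hi
  simp only [List.get_eq_getElem, List.getElem_zip] at *
  exact ⟨c1 i (by omega), c2 i (by omega)⟩

end zips

/-- The map `(π, v) ↦ π_v` is a bijection from pairs of an alignment
path `π ∈ 𝒜_{n,m}` and a positive-integer repetition vector `v ∈ (ℕ_{≥1})^{|π|}` onto
the set of sequences of the form `ε_a ⊗ ε_b` with `a, b` positive-integer vectors of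
equal coordinate sums; in particular, for each such `(a, b)` there is a unique `(π, v)`
with `π_v = ε_a ⊗ ε_b`. -/
theorem expandPath_bijection (n m : ℕ) :
    Function.Injective
      (fun pv : Σ π : AlignmentPath n m, Fin π.val.length → ℕ+ =>
        expandPath pv.1.val pv.2) ∧
    Set.range
      (fun pv : Σ π : AlignmentPath n m, Fin π.val.length → ℕ+ =>
        expandPath pv.1.val pv.2) =
      {l | ∃ (a : Fin (n + 1) → ℕ+) (b : Fin (m + 1) → ℕ+),
        (∑ i, (a i : ℕ)) = (∑ j, (b j : ℕ)) ∧ l = tensorSeq a b} ∧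
    ∀ (a : Fin (n + 1) → ℕ+) (b : Fin (m + 1) → ℕ+),
      (∑ i, (a i : ℕ)) = (∑ j, (b j : ℕ)) →
      ∃! pv : Σ π : AlignmentPath n m, Fin π.val.length → ℕ+,
        expandPath pv.1.val pv.2 = tensorSeq a b := by
  have hinj : Function.Injective
      (fun pv : Σ π : AlignmentPath n m, Fin π.val.length → ℕ+ =>
        expandPath pv.1.val pv.2) := by
    rintro ⟨⟨π, hπ⟩, v⟩ ⟨⟨π', hπ'⟩, v'⟩ h
    simp only at h
    have hNe : π.Chain' Ne := hπ.2.2.2.imp (fun a b hab => ((alignStep_iff _ _).1 hab).2)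
    have hNe' : π'.Chain' Ne := hπ'.2.2.2.imp (fun a b hab => ((alignStep_iff _ _).1 hab).2)
    obtain rfl : π = π' := expand_inj_path π hNe π' hNe' v v' h
    obtain rfl : v = v' := expand_inj_v π hNe v v' h
    rfl
  have hrange : Set.range
      (fun pv : Σ π : AlignmentPath n m, Fin π.val.length → ℕ+ =>
        expandPath pv.1.val pv.2) =
      {l | ∃ (a : Fin (n + 1) → ℕ+) (b : Fin (m + 1) → ℕ+),
        (∑ i, (a i : ℕ)) = (∑ j, (b j : ℕ)) ∧ l = tensorSeq a b} := by
    ext l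
    constructor
    · rintro ⟨⟨⟨π, hπ⟩, v⟩, rfl⟩
      obtain ⟨hne, hh, hl, hch⟩ := hπ
      simp only
      set E := expandPath π v with hE
      have hEne : E ≠ [] := expandPath_ne_nil hne v
      have hEh : E.head? = some (0, 0) := by rw [hE, expandPath_head? hne, hh]
      have hEl : E.getLast? = some (Fin.last n, Fin.last m) := by
        rw [hE, expandPath_getLast?, hl]
      have hEc : E.Chain' WeakStep :=
        expandPath_chain' (S := WeakStep) weakStep_refl
          (fun p q hpq => ((alignStep_iff p q).1 hpq).1) hch v
      obtain ⟨a, ha⟩ := eps_decode (E.map Prod.fst) (by simpa using hEne)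
        (by rw [List.head?_map, hEh]; rfl)
        (by rw [List.getLast?_map, hEl]; rfl)
        ((List.isChain_map _).2 (hEc.imp fun p q hw => hw.1))
      obtain ⟨b, hb⟩ := eps_decode (E.map Prod.snd) (by simpa using hEne)
        (by rw [List.head?_map, hEh]; rfl)
        (by rw [List.getLast?_map, hEl]; rfl)
        ((List.isChain_map _).2 (hEc.imp fun p q hw => hw.2))
      refine ⟨a, b, ?_, ?_⟩
      · rw [← length_epsSeq a, ← length_epsSeq b, ← ha, ← hb]
        simp
      · rw [tensorSeq, ← ha, ← hb, ← List.unzip_fst, ← List.unzip_snd, List.zip_unzip]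
    · rintro ⟨a, b, hsum, rfl⟩
      have hlen : (epsSeq a).length = (epsSeq b).length := by
        rw [length_epsSeq, length_epsSeq, hsum]
      have htc : (tensorSeq a b).Chain' WeakStep :=
        (zip_chain' hlen (epsSeq_chain' a) (epsSeq_chain' b)).imp (fun p q h => h)
      have htne : tensorSeq a b ≠ [] := by
        rw [← List.length_pos_iff, tensorSeq, List.length_zip, ← hlen, min_self]
        exact List.length_pos_iff.2 (epsSeq_ne_nil a)
      obtain ⟨π, v, hexp, hpne, hph, hpl, hpc⟩ := expand_decode (R := WeakStep) _ htne htc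
      refine ⟨⟨⟨π, hpne, ?_, ?_, ?_⟩, v⟩, hexp⟩
      · rw [hph, tensorSeq]
        exact zip_head? (epsSeq_head? a) (epsSeq_head? b)
      · rw [hpl, tensorSeq]
        exact zip_getLast? hlen (epsSeq_ne_nil a) (epsSeq_getLast? a) (epsSeq_getLast? b)
      · exact hpc.imp (fun p q hw => (alignStep_iff p q).2 hw)
  refine ⟨hinj, hrange, ?_⟩
  intro a b hsum
  have hmem : tensorSeq a b ∈ Set.range
      (fun pv : Σ π : AlignmentPath n m, Fin π.val.length → ℕ+ =>
        expandPath pv.1.val pv.2) := by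
    rw [hrange]
    exact ⟨a, b, hsum, rfl⟩
  obtain ⟨pv, hpv⟩ := hmem
  exact ⟨pv, hpv, fun q hq => hinj (hq.trans hpv.symm)⟩
end
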